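/- For every (z,λ) ∈ ℂ² and every n ≥ 0, one has | G(z,λ) − 2^{-n} log⁺|f_λⁿ(z)| | ≤ (log⁺|λ| + log 2) / 2^{n−1}. -/

import Mathlib

/-!
Applying `w ↦ w ^ 2 + c` multiplies `log⁺ ‖w‖` by `2` up to an additive error of at most
`log⁺ ‖c‖ + log 2`, by the estimate `log⁺ ‖a + b‖ ≤ log⁺ ‖a‖ + log⁺ ‖b‖ + log 2` used in both
directions. So consecutive approximants `2⁻ᵐ log⁺ ‖f_cᵐ z‖` differ by at most
`(log⁺ ‖c‖ + log 2) / 2ᵐ⁺¹`, and summing this geometric tail bounds the distance from the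
`n`-th approximant to the limit by `(log⁺ ‖c‖ + log 2) / 2ⁿ`.
-/

/-- `log⁺ t = log (max t 1)`. -/
noncomputable def logPlus (t : ℝ) : ℝ := Real.log (max t 1)

open Real Filter Topology

lemma logPlus_eq_posLog {t : ℝ} (ht : 0 ≤ t) : logPlus t = log⁺ t := by
  rw [logPlus, posLog_eq_log_max_one ht, max_comm]

lemma abs_posLog_norm_pow_add_sub_le {R : Type*} [SeminormedRing R] [NormOneClass R]
    [NormMulClass R] (d : ℕ) (w c : R) :
    |log⁺ ‖w ^ d + c‖ - d * log⁺ ‖w‖| ≤ log⁺ ‖c‖ + log 2 := by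
  have hpow : log⁺ ‖w ^ d‖ = d * log⁺ ‖w‖ := by rw [norm_pow, posLog_pow]
  have hlower := posLog_norm_add_le (w ^ d + c) (-c)
  rw [add_neg_cancel_right, norm_neg] at hlower
  rw [abs_le, ← hpow]
  constructor
  · linarith
  · linarith [posLog_norm_add_le (w ^ d) c]

section GreenFunction

variable {R : Type*} [SeminormedRing R] [NormOneClass R] [NormMulClass R]

noncomputable def greenApprox (c z : R) (n : ℕ) : ℝ :=
  (2 : ℝ)⁻¹ ^ n * log⁺ ‖(fun w => w ^ 2 + c)^[n] z‖

lemma dist_greenApprox_succ_le (c z : R) (m : ℕ) :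
    dist (greenApprox c z m) (greenApprox c z (m + 1)) ≤ (log⁺ ‖c‖ + log 2) / 2 / 2 ^ m := by
  set w := (fun w => w ^ 2 + c)^[m] z
  have hdiff : greenApprox c z m - greenApprox c z (m + 1) =
      -((2 : ℝ)⁻¹ ^ (m + 1) * (log⁺ ‖w ^ 2 + c‖ - (2 : ℕ) * log⁺ ‖w‖)) := by
    simp only [greenApprox, Function.iterate_succ_apply', w]
    push_cast
    ring
  rw [Real.dist_eq, hdiff, abs_neg, abs_mul, abs_of_pos (by positivity)]
  calc _ ≤ (2 : ℝ)⁻¹ ^ (m + 1) * (log⁺ ‖c‖ + log 2) := by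
        gcongr
        exact abs_posLog_norm_pow_add_sub_le 2 w c
    _ = _ := by
        rw [pow_succ, inv_pow]
        field_simp

lemma dist_greenApprox_le_of_tendsto {c z : R} {g : ℝ}
    (hg : Tendsto (greenApprox c z) atTop (𝓝 g)) (n : ℕ) :
    dist (greenApprox c z n) g ≤ (log⁺ ‖c‖ + log 2) / 2 ^ n :=
  dist_le_of_le_geometric_two_of_tendsto (hu₂ := dist_greenApprox_succ_le c z) hg n

end GreenFunction

theorem stmt4 (G : ℂ × ℂ → ℝ)
    (hG : ∀ p : ℂ × ℂ, Filter.Tendsto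
      (fun n : ℕ => (2 : ℝ)⁻¹ ^ n * logPlus ‖(fun z => z ^ 2 + p.2)^[n] p.1‖)
      Filter.atTop (nhds (G p)))
    (z lam : ℂ) (n : ℕ) :
    |G (z, lam) - (2 : ℝ)⁻¹ ^ n * logPlus ‖(fun w => w ^ 2 + lam)^[n] z‖| ≤
      (logPlus ‖lam‖ + Real.log 2) / (2 : ℝ) ^ ((n : ℤ) - 1) := by
  have happrox (c w : ℂ) (m : ℕ) :
      (2 : ℝ)⁻¹ ^ m * logPlus ‖(fun w => w ^ 2 + c)^[m] w‖ = greenApprox c w m := by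
    rw [greenApprox, logPlus_eq_posLog (norm_nonneg _)]
  have hlim : Tendsto (greenApprox lam z) atTop (𝓝 (G (z, lam))) := by
    simpa only [happrox] using hG (z, lam)
  rw [happrox, logPlus_eq_posLog (norm_nonneg lam), abs_sub_comm, ← Real.dist_eq]
  calc _ ≤ (log⁺ ‖lam‖ + log 2) / 2 ^ n := dist_greenApprox_le_of_tendsto hlim n
    _ ≤ _ := by
        have hK : 0 ≤ log⁺ ‖lam‖ + log 2 := add_nonneg posLog_nonneg (log_nonneg one_le_two)
        rw [← zpow_natCast]
        gcongr
        · norm_num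
        · omega
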